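/- Let 1/2 < μ ≤ 1. For all x, y ∈ [0,1] with x < y, there exists a point x₀ with x < x₀ < y and an integer n ≥ 0 such that T_μⁿ(x₀) = 1/2 (where T_μⁿ denotes the n-th iterate of T_μ); that is, the set of eventual preimages of 1/2 under T_μ is dense in [0,1]. -/

import Mathlib

/-!
An interval of `[0,1]` that does not contain `1/2` lies in one branch of `T_μ`, which maps it
affinely onto an interval of `[0,1]` that is `2μ > 1` times longer. Lengths in `[0,1]` are at
most `1`, so some iterated image of every interval contains `1/2`. The symmetry
`T_μ(1 - x) = T_μ(x)` reduces the right branch to the left one.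
-/

open Set

/-- The symmetric tent map of height `μ`:
`T_μ(x) = 2μx` for `x ≤ 1/2` and `T_μ(x) = 2μ(1-x)` for `x > 1/2`. -/
noncomputable def tentMap (μ : ℝ) (x : ℝ) : ℝ :=
  if x ≤ 1/2 then 2*μ*x else 2*μ*(1-x)

open Function

def HitsHalf (μ x : ℝ) : Prop := ∃ n : ℕ, (tentMap μ)^[n] x = 1/2

variable {μ a b x : ℝ}

lemma tentMap_of_le_half (hx : x ≤ 1/2) : tentMap μ x = 2*μ*x := if_pos hx

lemma tentMap_one_sub (μ x : ℝ) : tentMap μ (1 - x) = tentMap μ x := by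
  unfold tentMap
  split_ifs with h₁ h₂ h₂
  · obtain rfl : x = 1/2 := by linarith
    ring
  · ring
  · ring
  · linarith

lemma HitsHalf.of_tentMap (h : HitsHalf μ (tentMap μ x)) : HitsHalf μ x := by
  obtain ⟨n, hn⟩ := h
  exact ⟨n + 1, by rwa [iterate_succ_apply]⟩

lemma HitsHalf.one_sub (h : HitsHalf μ x) : HitsHalf μ (1 - x) := by
  obtain ⟨_ | n, hn⟩ := h
  · exact ⟨0, by simp only [iterate_zero, id_eq] at hn ⊢; linarith⟩
  · exact ⟨n + 1, by rwa [iterate_succ_apply, tentMap_one_sub, ← iterate_succ_apply]⟩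

lemma exists_hitsHalf_of_mem_Ioo_one_sub (h : ∃ z ∈ Ioo (1 - b) (1 - a), HitsHalf μ z) :
    ∃ x ∈ Ioo a b, HitsHalf μ x := by
  obtain ⟨z, ⟨hz₁, hz₂⟩, hz⟩ := h
  exact ⟨1 - z, ⟨by linarith, by linarith⟩, hz.one_sub⟩

lemma exists_hitsHalf_of_le_half (hμ : 0 < μ) (hb : b ≤ 1/2)
    (h : ∃ z ∈ Ioo (2*μ*a) (2*μ*b), HitsHalf μ z) : ∃ x ∈ Ioo a b, HitsHalf μ x := by
  obtain ⟨z, ⟨hz₁, hz₂⟩, hz⟩ := h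
  have h2μ : 0 < 2*μ := by linarith
  have hmem : z / (2*μ) ∈ Ioo a b :=
    ⟨(lt_div_iff₀ h2μ).2 (by linarith), (div_lt_iff₀ h2μ).2 (by linarith)⟩
  refine ⟨z / (2*μ), hmem, HitsHalf.of_tentMap ?_⟩
  rwa [tentMap_of_le_half (hmem.2.le.trans hb), mul_div_cancel₀ _ h2μ.ne']

lemma exists_hitsHalf_of_one_lt_pow_mul_sub (hμ₁ : 1/2 < μ) (hμ₂ : μ ≤ 1) (n : ℕ) (ha : 0 ≤ a)
    (hb : b ≤ 1) (hlen : 1 < (2*μ)^n * (b - a)) : ∃ x ∈ Ioo a b, HitsHalf μ x := by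
  induction n generalizing a b with
  | zero => simp only [pow_zero, one_mul] at hlen; linarith
  | succ n ih =>
    have hμ : 0 < μ := by linarith
    rcases lt_or_ge a (1/2) with ha' | ha'
    · rcases lt_or_ge (1/2) b with hb' | hb'
      · exact ⟨1/2, ⟨ha', hb'⟩, 0, rfl⟩
      · refine exists_hitsHalf_of_le_half hμ hb' (ih (by positivity) (by nlinarith) ?_)
        calc 1 < (2*μ)^(n+1) * (b - a) := hlen
          _ = (2*μ)^n * (2*μ*b - 2*μ*a) := by ring
    · refine exists_hitsHalf_of_mem_Ioo_one_sub <|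
        exists_hitsHalf_of_le_half hμ (by linarith) (ih (by nlinarith) (by nlinarith) ?_)
      calc 1 < (2*μ)^(n+1) * (b - a) := hlen
        _ = (2*μ)^n * (2*μ*(1 - a) - 2*μ*(1 - b)) := by ring

theorem dense_preimages_of_half (μ : ℝ) (hμ1 : 1/2 < μ) (hμ2 : μ ≤ 1)
    (x y : ℝ) (hx : x ∈ Icc (0:ℝ) 1) (hy : y ∈ Icc (0:ℝ) 1) (hxy : x < y) :
    ∃ x₀ : ℝ, x < x₀ ∧ x₀ < y ∧ ∃ n : ℕ, (tentMap μ)^[n] x₀ = 1/2 := by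
  obtain ⟨n, hn⟩ := pow_unbounded_of_one_lt (y - x)⁻¹ (by linarith : (1:ℝ) < 2*μ)
  have hlen : 1 < (2*μ)^n * (y - x) := (inv_lt_iff_one_lt_mul₀ (sub_pos.2 hxy)).1 hn
  obtain ⟨x₀, ⟨hx₀, hx₀y⟩, hhits⟩ :=
    exists_hitsHalf_of_one_lt_pow_mul_sub hμ1 hμ2 n hx.1 hy.2 hlen
  exact ⟨x₀, hx₀, hx₀y, hhits⟩
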